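/- arXiv:1307.0643 — 3 statements merged into one kernel-verified Lean document; each statement's English description precedes it below -/
import Mathlib

section
/- The information content is a supermodular set function: for all subsets A, B of {1,...,n}, I(X_{A∪B}) + I(X_{A∩B}) ≥ I(X_A) + I(X_B). -/
open Real Finset

/-- Shannon entropy of a (probability mass) function on a finite type. -/
noncomputable def entH {α : Type*} [Fintype α] (q : α → ℝ) : ℝ :=
  ∑ x, Real.negMulLog (q x)

/-- Marginal of `p` on the coordinate set `A`. -/
noncomputable def marg {V Λ : Type*} [Fintype V] [DecidableEq V] [Fintype Λ] [DecidableEq Λ]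
    (p : (V → Λ) → ℝ) (A : Finset V) : (A → Λ) → ℝ :=
  fun y => ∑ x : V → Λ, if ∀ i : A, x i.1 = y i then p x else 0

/-- Marginal probability of the `A`-part of the full realization `x`. -/
noncomputable def margAt {V Λ : Type*} [Fintype V] [DecidableEq V] [Fintype Λ] [DecidableEq Λ]
    (p : (V → Λ) → ℝ) (A : Finset V) (x : V → Λ) : ℝ :=
  marg p A (fun i => x i.1)

/-- Information content `I(X_A) = ∑_{i∈A} H(X_i) − H(X_A)`
(this formula automatically gives `0` when `|A| < 2`). -/
noncomputable def info {V Λ : Type*} [Fintype V] [DecidableEq V] [Fintype Λ] [DecidableEq Λ]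
    (p : (V → Λ) → ℝ) (A : Finset V) : ℝ :=
  (∑ i ∈ A, entH (marg p {i})) - entH (marg p A)

/-- Kullback–Leibler divergence. -/
noncomputable def KL {α : Type*} [Fintype α] (q r : α → ℝ) : ℝ :=
  ∑ x, q x * Real.log (q x / r x)

/-!
Since `A ↦ ∑_{i∈A} H(X_i)` is modular, supermodularity of `I` is submodularity of entropy,
`H(X_{A∪B}) + H(X_{A∩B}) ≤ H(X_A) + H(X_B)`. With `p_C` the marginal on `C`, the gap is
`E_p[log (p_{A∪B} p_{A∩B} / (p_A p_B))] ≥ E_p[1 - p_A p_B / (p_{A∪B} p_{A∩B})]` by `log t ≤ t - 1`,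
and this is nonnegative because the glued distribution `p_A p_B / p_{A∩B}` on configurations of
`A ∪ B` has the same total mass as `p`.

Marginals are evaluated at full configurations (`margAt`). Summing over full configurations a
function that depends only on the coordinates in `C` counts every configuration on `C` equally
often (the size of a `restrictFiber`), and these factors cancel.
-/

section

variable {V Λ : Type*} [Fintype V] [DecidableEq V] [Fintype Λ] [DecidableEq Λ]

def restrictFiber (C : Finset V) (x : V → Λ) : Finset (V → Λ) :=
  {y | ∀ i ∈ C, y i = x i}

@[simp]
lemma mem_restrictFiber {C : Finset V} {x y : V → Λ} :
    y ∈ restrictFiber C x ↔ ∀ i ∈ C, y i = x i := by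
  simp [restrictFiber]

lemma mem_restrictFiber_comm {C : Finset V} {x y : V → Λ} :
    y ∈ restrictFiber C x ↔ x ∈ restrictFiber C y := by
  simp only [mem_restrictFiber]
  exact forall₂_congr fun _ _ => eq_comm

lemma card_restrictFiber_eq (C : Finset V) (x y : V → Λ) :
    #(restrictFiber C x) = #(restrictFiber C y) :=
  card_nbij' (fun z => C.piecewise y z) (fun z => C.piecewise x z)
    (fun z _ => by simp +contextual)
    (fun z _ => by simp +contextual)
    (fun z hz => by ext i; by_cases hi : i ∈ C <;> simp_all)
    (fun z hz => by ext i; by_cases hi : i ∈ C <;> simp_all)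

lemma card_restrictFiber_pos (C : Finset V) (x : V → Λ) : 0 < #(restrictFiber C x) :=
  card_pos.2 ⟨x, by simp⟩

lemma margAt_eq_sum_restrictFiber (p : (V → Λ) → ℝ) (C : Finset V) (x : V → Λ) :
    margAt p C x = ∑ y ∈ restrictFiber C x, p y := by
  simp [margAt, marg, restrictFiber, sum_filter]

lemma marg_eq_sum_filter (p : (V → Λ) → ℝ) (C : Finset V) (y : C → Λ) :
    marg p C y = ∑ x with C.restrict x = y, p x := by
  simp [marg, sum_filter, funext_iff, Finset.restrict]

lemma entH_marg (p : (V → Λ) → ℝ) (C : Finset V) :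
    entH (marg p C) = -∑ x, p x * log (margAt p C x) := by
  rw [← sum_fiberwise univ C.restrict, entH, ← sum_neg_distrib]
  refine sum_congr rfl fun y _ => ?_
  rw [negMulLog, neg_mul, neg_inj, marg_eq_sum_filter, sum_mul]
  refine sum_congr rfl fun x hx => ?_
  change _ = p x * log (marg p C (C.restrict x))
  rw [(mem_filter.1 hx).2, marg_eq_sum_filter]

lemma dependsOn_margAt (p : (V → Λ) → ℝ) (C : Finset V) : DependsOn (margAt p C) C := by
  intro x y h
  rw [margAt_eq_sum_restrictFiber, margAt_eq_sum_restrictFiber]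
  congr 1
  ext z
  simp only [mem_restrictFiber]
  exact forall₂_congr fun i hi => by rw [h i hi]

lemma margAt_nonneg {p : (V → Λ) → ℝ} (hp : ∀ x, 0 ≤ p x) (C : Finset V) (x : V → Λ) :
    0 ≤ margAt p C x := by
  rw [margAt_eq_sum_restrictFiber]
  exact sum_nonneg fun y _ => hp y

lemma le_margAt {p : (V → Λ) → ℝ} (hp : ∀ x, 0 ≤ p x) (C : Finset V) (x : V → Λ) :
    p x ≤ margAt p C x := by
  rw [margAt_eq_sum_restrictFiber]
  exact single_le_sum (fun y _ => hp y) (by simp)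

lemma margAt_anti {p : (V → Λ) → ℝ} (hp : ∀ x, 0 ≤ p x) {C D : Finset V} (h : C ⊆ D)
    (x : V → Λ) : margAt p D x ≤ margAt p C x := by
  rw [margAt_eq_sum_restrictFiber, margAt_eq_sum_restrictFiber]
  exact sum_le_sum_of_subset_of_nonneg (fun _ hy => by simp_all [h _]) fun y _ _ => hp y

lemma margAt_mul_div_margAt {p : (V → Λ) → ℝ} (hp : ∀ x, 0 ≤ p x) {C D : Finset V} (h : C ⊆ D)
    (x : V → Λ) :
    margAt p C x * (margAt p D x / margAt p C x) = margAt p D x := by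
  rcases (margAt_nonneg hp C x).eq_or_lt with hC | hC
  · have hD : margAt p D x = 0 := le_antisymm (hC ▸ margAt_anti hp h x) (margAt_nonneg hp D x)
    rw [← hC, hD, zero_mul]
  · exact mul_div_cancel₀ _ hC.ne'

lemma sum_margAt_mul (q : (V → Λ) → ℝ) {C : Finset V} {F : (V → Λ) → ℝ} (hF : DependsOn F C)
    (x₀ : V → Λ) : ∑ x, margAt q C x * F x = #(restrictFiber C x₀) * ∑ x, q x * F x :=
  calc ∑ x, margAt q C x * F x = ∑ x, ∑ y ∈ restrictFiber C x, q y * F y := by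
        refine sum_congr rfl fun x _ => ?_
        rw [margAt_eq_sum_restrictFiber, sum_mul]
        exact sum_congr rfl fun y hy => by rw [hF (mem_restrictFiber.1 hy)]
    _ = ∑ y, ∑ _x ∈ restrictFiber C y, q y * F y :=
        sum_comm' fun _ _ => by
          simpa only [mem_univ, true_and, and_true] using mem_restrictFiber_comm
    _ = #(restrictFiber C x₀) * ∑ x, q x * F x := by
        rw [mul_sum]
        refine sum_congr rfl fun y _ => ?_
        rw [sum_const, card_restrictFiber_eq C y x₀, nsmul_eq_mul]

lemma sum_margAt (q : (V → Λ) → ℝ) (C : Finset V) (x₀ : V → Λ) :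
    ∑ x, margAt q C x = #(restrictFiber C x₀) * ∑ x, q x := by
  simpa using sum_margAt_mul q ((dependsOn_const (1 : ℝ)).mono (Set.empty_subset _)) x₀

lemma mem_restrictFiber_and_mem_restrictFiber_iff {A B : Finset V} {x y z : V → Λ} :
    y ∈ restrictFiber B x ∧ z ∈ restrictFiber A y ↔
      y ∈ restrictFiber (A ∪ B) (A.piecewise z x) ∧ z ∈ restrictFiber (A ∩ B) x := by
  simp only [mem_restrictFiber, mem_union, mem_inter]
  grind [Finset.piecewise]

lemma margAt_margAt (p : (V → Λ) → ℝ) (A B : Finset V) (x x₀ : V → Λ) :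
    margAt (margAt p A) B x = #(restrictFiber (A ∪ B) x₀) * margAt p (A ∩ B) x := by
  simp only [margAt_eq_sum_restrictFiber]
  rw [sum_comm' fun _ _ => mem_restrictFiber_and_mem_restrictFiber_iff, mul_sum]
  refine sum_congr rfl fun z _ => ?_
  rw [sum_const, card_restrictFiber_eq _ _ x₀, nsmul_eq_mul]

/-- `exp` of minus the pointwise conditional mutual information of `X_A` and `X_B`
given `X_{A∩B}`. -/
noncomputable def margRatio (p : (V → Λ) → ℝ) (A B : Finset V) (x : V → Λ) : ℝ :=
  margAt p A x * margAt p B x / (margAt p (A ∪ B) x * margAt p (A ∩ B) x)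

lemma dependsOn_margRatio (p : (V → Λ) → ℝ) (A B : Finset V) :
    DependsOn (margRatio p A B) (A ∪ B : Finset V) := by
  intro x y h
  have hmono : ∀ {C : Finset V}, C ⊆ A ∪ B → margAt p C x = margAt p C y :=
    fun hC => dependsOn_margAt p _ fun i hi => h i (hC hi)
  rw [margRatio, margRatio, hmono subset_union_left, hmono subset_union_right, hmono subset_rfl,
    hmono (inter_subset_left.trans subset_union_left)]

lemma sum_margAt_mul_div_margAt_inter {p : (V → Λ) → ℝ} (hp : ∀ x, 0 ≤ p x) (A B : Finset V)
    (x₀ : V → Λ) :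
    ∑ x, margAt p A x * (margAt p B x / margAt p (A ∩ B) x)
      = #(restrictFiber (A ∪ B) x₀) * ∑ x, p x := by
  have hB : (0 : ℝ) < #(restrictFiber B x₀) := by exact_mod_cast card_restrictFiber_pos B x₀
  have hdep : DependsOn (fun x => margAt p B x / margAt p (A ∩ B) x) (B : Finset V) :=
    fun x y h => by
      dsimp only
      rw [dependsOn_margAt p B h, dependsOn_margAt p (A ∩ B) fun i hi => h i (mem_inter.1 hi).2]
  refine mul_left_cancel₀ hB.ne' ?_
  calc _ = ∑ x, margAt (margAt p A) B x * (margAt p B x / margAt p (A ∩ B) x) :=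
        (sum_margAt_mul _ hdep x₀).symm
    _ = #(restrictFiber (A ∪ B) x₀) * ∑ x, margAt p B x := by
        rw [mul_sum]
        refine sum_congr rfl fun x _ => ?_
        rw [margAt_margAt p A B x x₀, mul_assoc, margAt_mul_div_margAt hp inter_subset_right]
    _ = _ := by
        rw [sum_margAt p B x₀]
        ring

lemma sum_mul_margRatio_le {p : (V → Λ) → ℝ} (hp : ∀ x, 0 ≤ p x) (A B : Finset V) :
    ∑ x, p x * margRatio p A B x ≤ ∑ x, p x := by
  rcases isEmpty_or_nonempty (V → Λ) with _ | ⟨⟨x₀⟩⟩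
  · simp
  have hU : (0 : ℝ) < #(restrictFiber (A ∪ B) x₀) := by
    exact_mod_cast card_restrictFiber_pos (A ∪ B) x₀
  refine le_of_mul_le_mul_left ?_ hU
  calc _ = ∑ x, margAt p (A ∪ B) x * margRatio p A B x :=
        (sum_margAt_mul p (dependsOn_margRatio p A B) x₀).symm
    _ ≤ ∑ x, margAt p A x * (margAt p B x / margAt p (A ∩ B) x) := by
        refine sum_le_sum fun x _ => ?_
        rcases (margAt_nonneg hp (A ∪ B) x).eq_or_lt with h | h
        · rw [← h, zero_mul]
          exact mul_nonneg (margAt_nonneg hp A x)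
            (div_nonneg (margAt_nonneg hp B x) (margAt_nonneg hp _ x))
        · rw [margRatio, ← mul_div_assoc, mul_div_mul_left _ _ h.ne', mul_div_assoc]
    _ = _ := sum_margAt_mul_div_margAt_inter hp A B x₀

lemma mul_one_sub_margRatio_le {p : (V → Λ) → ℝ} (hp : ∀ x, 0 ≤ p x) (A B : Finset V)
    (x : V → Λ) :
    p x * (1 - margRatio p A B x) ≤ p x * (log (margAt p (A ∪ B) x) + log (margAt p (A ∩ B) x)
      - log (margAt p A x) - log (margAt p B x)) := by
  rcases (hp x).eq_or_lt with h | h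
  · simp [← h]
  refine mul_le_mul_of_nonneg_left ?_ h.le
  have hpos : ∀ C, 0 < margAt p C x := fun C => h.trans_le (le_margAt hp C x)
  have hUI := mul_pos (hpos (A ∪ B)) (hpos (A ∩ B))
  have hAB := mul_pos (hpos A) (hpos B)
  have := one_sub_inv_le_log_of_pos (div_pos hUI hAB)
  rw [inv_div, log_div hUI.ne' hAB.ne', log_mul (hpos _).ne' (hpos _).ne',
    log_mul (hpos _).ne' (hpos _).ne'] at this
  rw [margRatio]
  linarith

theorem entH_marg_union_add_entH_marg_inter_le {p : (V → Λ) → ℝ} (hp : ∀ x, 0 ≤ p x)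
    (A B : Finset V) :
    entH (marg p (A ∪ B)) + entH (marg p (A ∩ B)) ≤ entH (marg p A) + entH (marg p B) := by
  have hlog := sum_le_sum fun x (_ : x ∈ univ) => mul_one_sub_margRatio_le hp A B x
  have hratio := sum_mul_margRatio_le hp A B
  simp only [entH_marg, mul_sub, mul_add, mul_one, sum_sub_distrib, sum_add_distrib] at hlog ⊢
  linarith

end

theorem info_supermodular_general {V Λ : Type*} [Fintype V] [DecidableEq V] [Fintype Λ] [DecidableEq Λ]
    (p : (V → Λ) → ℝ) (hp : ∀ x, 0 ≤ p x)
    (A B : Finset V) :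
    info p A + info p B ≤ info p (A ∪ B) + info p (A ∩ B) := by
  have hsingle := sum_union_inter (s₁ := A) (s₂ := B) (f := fun i => entH (marg p {i}))
  have hent := entH_marg_union_add_entH_marg_inter_le hp A B
  simp only [info]
  linarith

/-- the information content is a supermodular set function. -/
theorem info_supermodular {V Λ : Type*} [Fintype V] [DecidableEq V] [Fintype Λ] [DecidableEq Λ]
    (p : (V → Λ) → ℝ) (hp : ∀ x, 0 ≤ p x) (hsum : ∑ x, p x = 1)
    (A B : Finset V) :
    info p A + info p B ≤ info p (A ∪ B) + info p (A ∩ B) :=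
  info_supermodular_general p hp A B
end

section
/- Equality I(X_{C_1∪C_2}) + I(X_{C_1∩C_2}) = I(X_{C_1}) + I(X_{C_2}) holds if and only if X_{C_1\C_2} and X_{C_2\C_1} are conditionally independent given X_{C_1∩C_2}. -/
open Real Finset

/-! The left-hand side minus the right-hand side is the entropy defect
`H(X_{C₁}) + H(X_{C₂}) − H(X_{C₁∪C₂}) − H(X_{C₁∩C₂})`, and this is the Kullback–Leibler divergence
of the law of `X_{C₁∪C₂}` from the glued law `P(x_{C₁}) P(x_{C₂}) / P(x_{C₁∩C₂})`. The glued law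
has the same total mass as `P`, because summing `x_{C₁∖C₂}` out of `P(x_{C₁})` leaves
`P(x_{C₁∩C₂})`; so by Gibbs' inequality the divergence vanishes exactly when the two laws agree,
which is the factorisation `P(x_{C₁∪C₂}) P(x_{C₁∩C₂}) = P(x_{C₁}) P(x_{C₂})`. -/

open InformationTheory

lemma KL_eq_sum_mul_klFun {α : Type*} [Fintype α] {q r : α → ℝ} (hsum : ∑ a, q a = ∑ a, r a)
    (hqr : ∀ a, r a = 0 → q a = 0) :
    KL q r = ∑ a, r a * klFun (q a / r a) := by
  have hterm (a : α) : q a * log (q a / r a) = r a * klFun (q a / r a) + (q a - r a) := by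
    rcases eq_or_ne (r a) 0 with hr | hr
    · simp [hr, hqr a hr]
    · rw [klFun_apply]
      field_simp
      ring
  simp only [KL, hterm, sum_add_distrib, sum_sub_distrib, hsum, sub_self, add_zero]

lemma KL_eq_zero_iff {α : Type*} [Fintype α] {q r : α → ℝ} (hq : ∀ a, 0 ≤ q a)
    (hr : ∀ a, 0 ≤ r a) (hsum : ∑ a, q a = ∑ a, r a) (hqr : ∀ a, r a = 0 → q a = 0) :
    KL q r = 0 ↔ q = r := by
  rw [KL_eq_sum_mul_klFun hsum hqr, sum_eq_zero_iff_of_nonneg fun a _ ↦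
    mul_nonneg (hr a) (klFun_nonneg (div_nonneg (hq a) (hr a))), funext_iff]
  refine forall_congr' fun a ↦ ?_
  rcases eq_or_ne (r a) 0 with h | h
  · simp [h, hqr a h]
  · rw [mul_eq_zero, klFun_eq_zero_iff (div_nonneg (hq a) (hr a)), div_eq_one_iff_eq h]
    simp [h]

section Marginals

variable {V Λ : Type*} [Fintype V] [DecidableEq V] [Fintype Λ] [DecidableEq Λ]
  (p : (V → Λ) → ℝ)

lemma marg_eq_sum_ite (A : Finset V) (y : A → Λ) :
    marg p A y = ∑ x, if (fun i : A ↦ x i) = y then p x else 0 := by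
  simp [marg, funext_iff]

lemma sum_marg_mul (A : Finset V) (g : (A → Λ) → ℝ) :
    ∑ y, marg p A y * g y = ∑ x, p x * g (fun i : A ↦ x i) := by
  simp only [marg_eq_sum_ite, sum_mul, ite_mul, zero_mul]
  rw [sum_comm]
  simp

lemma sum_marg (A : Finset V) : ∑ y, marg p A y = ∑ x, p x := by
  simpa using sum_marg_mul p A 1

lemma entH_marg_eq {A W : Finset V} (h : A ⊆ W) :
    entH (marg p A) = -∑ y, marg p W y * log (marg p A (fun i ↦ y ⟨i, h i.2⟩)) := by
  simp only [entH, negMulLog, neg_mul, sum_neg_distrib, neg_inj]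
  rw [sum_marg_mul p A fun z ↦ log (marg p A z),
    sum_marg_mul p W fun y ↦ log (marg p A (fun i ↦ y ⟨i, h i.2⟩))]

lemma sum_marg_mul_eq_sum_marg_inter_mul (A B : Finset V) (g : (B → Λ) → ℝ) :
    ∑ y : (A ∪ B : Finset V) → Λ,
        marg p A (fun i ↦ y ⟨i, mem_union_left _ i.2⟩) * g (fun i ↦ y ⟨i, mem_union_right _ i.2⟩)
      = ∑ w : B → Λ, marg p (A ∩ B) (fun i ↦ w ⟨i, mem_of_mem_inter_right i.2⟩) * g w := by
  simp only [marg_eq_sum_ite, sum_mul, ite_mul, zero_mul]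
  rw [sum_comm, sum_comm (γ := B → Λ)]
  refine sum_congr rfl fun x _ ↦ ?_
  rw [← sum_filter, ← sum_filter]
  -- a configuration on `A ∪ B` extending `x|_A` is determined by its part on `B`,
  -- which can be any extension of `x|_{A∩B}`
  refine sum_nbij' (fun y i ↦ y ⟨i, mem_union_right _ i.2⟩)
    (fun w i ↦ if h : (i : V) ∈ B then w ⟨i, h⟩ else x i) ?_ ?_ ?_ ?_ (fun _ _ ↦ rfl)
  all_goals intro y hy
  all_goals simp only [mem_filter, mem_univ, true_and, funext_iff, Subtype.forall] at hy ⊢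
  · exact fun a ha ↦ hy a (mem_of_mem_inter_left ha)
  · intro a ha
    by_cases haB : a ∈ B
    · simp [haB, hy a (mem_inter.2 ⟨ha, haB⟩)]
    · simp [haB]
  · intro a ha
    by_cases haB : a ∈ B
    · simp [haB]
    · simp [haB, hy a ((mem_union.1 ha).resolve_right haB)]
  · exact fun a ha ↦ dif_pos ha

lemma info_union_add_info_inter_sub (A B : Finset V) :
    info p (A ∪ B) + info p (A ∩ B) - (info p A + info p B) =
      entH (marg p A) + entH (marg p B) - entH (marg p (A ∪ B)) - entH (marg p (A ∩ B)) := by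
  simp only [info]
  linarith [sum_union_inter (s₁ := A) (s₂ := B) (f := fun i ↦ entH (marg p {i}))]

/-- `P(x_A) P(x_B) / P(x_{A∩B})` as a function of `x_{A∪B}`: the law with the same marginals on
`A` and on `B` as `P` under which `X_{A∖B}` and `X_{B∖A}` are conditionally independent given
`X_{A∩B}`. -/
noncomputable def condIndepMarg (A B : Finset V) : ((A ∪ B : Finset V) → Λ) → ℝ :=
  fun y ↦ marg p A (fun i ↦ y ⟨i, mem_union_left _ i.2⟩) *
    marg p B (fun i ↦ y ⟨i, mem_union_right _ i.2⟩) /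
    marg p (A ∩ B) (fun i ↦ y ⟨i, mem_union_left _ (mem_of_mem_inter_left i.2)⟩)

variable {p}

lemma marg_nonneg (hp : ∀ x, 0 ≤ p x) (A : Finset V) (y : A → Λ) : 0 ≤ marg p A y :=
  sum_nonneg fun x _ ↦ by split <;> simp [hp x]

lemma marg_le_marg_of_subset (hp : ∀ x, 0 ≤ p x) {A B : Finset V} (h : A ⊆ B) (y : B → Λ) :
    marg p B y ≤ marg p A (fun i ↦ y ⟨i, h i.2⟩) := by
  simp only [marg_eq_sum_ite]
  refine sum_le_sum fun x _ ↦ ?_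
  split_ifs with hB hA
  · exact le_rfl
  · subst hB
    exact absurd rfl hA
  · exact hp x
  · exact le_rfl

lemma condIndepMarg_nonneg (hp : ∀ x, 0 ≤ p x) {A B : Finset V} (y : (A ∪ B : Finset V) → Λ) :
    0 ≤ condIndepMarg p A B y :=
  div_nonneg (mul_nonneg (marg_nonneg hp _ _) (marg_nonneg hp _ _)) (marg_nonneg hp _ _)

lemma sum_condIndepMarg (hp : ∀ x, 0 ≤ p x) (A B : Finset V) :
    ∑ y, condIndepMarg p A B y = ∑ x, p x := by
  simp only [condIndepMarg, mul_div_assoc]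
  rw [sum_marg_mul_eq_sum_marg_inter_mul p A B fun w ↦
    marg p B w / marg p (A ∩ B) (fun i ↦ w ⟨i, mem_of_mem_inter_right i.2⟩), ← sum_marg p B]
  refine sum_congr rfl fun w _ ↦ ?_
  rcases eq_or_ne (marg p (A ∩ B) (fun i ↦ w ⟨i, mem_of_mem_inter_right i.2⟩)) 0 with h | h
  · have := marg_le_marg_of_subset hp (inter_subset_right (s₁ := A)) w
    rw [h] at this ⊢
    linarith [marg_nonneg hp B w]
  · exact mul_div_cancel₀ _ h

lemma marg_pos_of_marg_union_pos (hp : ∀ x, 0 ≤ p x) {A B : Finset V}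
    {y : (A ∪ B : Finset V) → Λ} (h : 0 < marg p (A ∪ B) y) :
    0 < marg p A (fun i ↦ y ⟨i, mem_union_left _ i.2⟩) ∧
      0 < marg p B (fun i ↦ y ⟨i, mem_union_right _ i.2⟩) ∧
      0 < marg p (A ∩ B) (fun i ↦ y ⟨i, mem_union_left _ (mem_of_mem_inter_left i.2)⟩) :=
  ⟨h.trans_le (marg_le_marg_of_subset hp subset_union_left y),
    h.trans_le (marg_le_marg_of_subset hp subset_union_right y),
    h.trans_le (marg_le_marg_of_subset hp (inter_subset_left.trans subset_union_left) y)⟩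

lemma entH_add_entH_sub_eq_KL (hp : ∀ x, 0 ≤ p x) (A B : Finset V) :
    entH (marg p A) + entH (marg p B) - entH (marg p (A ∪ B)) - entH (marg p (A ∩ B))
      = KL (marg p (A ∪ B)) (condIndepMarg p A B) := by
  have hU : entH (marg p (A ∪ B)) = -∑ y, marg p (A ∪ B) y * log (marg p (A ∪ B) y) := by
    simp [entH, negMulLog, sum_neg_distrib]
  rw [entH_marg_eq p (subset_union_left (s₂ := B)), entH_marg_eq p (subset_union_right (s₁ := A)),
    entH_marg_eq p ((inter_subset_left (s₂ := B)).trans subset_union_left), hU]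
  have hterm (y : (A ∪ B : Finset V) → Λ) :
      marg p (A ∪ B) y * log (marg p (A ∪ B) y / condIndepMarg p A B y) =
        marg p (A ∪ B) y * log (marg p (A ∪ B) y)
        + marg p (A ∪ B) y *
          log (marg p (A ∩ B) (fun i ↦ y ⟨i, mem_union_left _ (mem_of_mem_inter_left i.2)⟩))
        - marg p (A ∪ B) y * log (marg p A (fun i ↦ y ⟨i, mem_union_left _ i.2⟩))
        - marg p (A ∪ B) y * log (marg p B (fun i ↦ y ⟨i, mem_union_right _ i.2⟩)) := by
    rcases (marg_nonneg hp _ y).eq_or_lt with h | h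
    · simp [← h]
    obtain ⟨hA, hB, hAB⟩ := marg_pos_of_marg_union_pos hp h
    rw [condIndepMarg, div_div_eq_mul_div, log_div (by positivity) (by positivity),
      log_mul h.ne' hAB.ne', log_mul hA.ne' hB.ne']
    ring
  simp only [KL, hterm, sum_add_distrib, sum_sub_distrib]
  ring

lemma marg_union_eq_zero_of_condIndepMarg_eq_zero (hp : ∀ x, 0 ≤ p x) {A B : Finset V}
    (y : (A ∪ B : Finset V) → Λ) (h : condIndepMarg p A B y = 0) : marg p (A ∪ B) y = 0 := by
  by_contra hne
  obtain ⟨hA, hB, hAB⟩ := marg_pos_of_marg_union_pos hp ((marg_nonneg hp _ y).lt_of_ne' hne)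
  exact (div_pos (mul_pos hA hB) hAB).ne' h

lemma marg_union_eq_condIndepMarg_apply_iff (hp : ∀ x, 0 ≤ p x) {A B : Finset V}
    (y : (A ∪ B : Finset V) → Λ) :
    marg p (A ∪ B) y = condIndepMarg p A B y ↔
      marg p (A ∪ B) y *
          marg p (A ∩ B) (fun i ↦ y ⟨i, mem_union_left _ (mem_of_mem_inter_left i.2)⟩) =
        marg p A (fun i ↦ y ⟨i, mem_union_left _ i.2⟩) *
          marg p B (fun i ↦ y ⟨i, mem_union_right _ i.2⟩) := by
  rcases (marg_nonneg hp (A ∩ B)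
    (fun i ↦ y ⟨i, mem_union_left _ (mem_of_mem_inter_left i.2)⟩)).eq_or_lt with h | h
  · have hU := marg_le_marg_of_subset hp
      ((inter_subset_left (s₂ := B)).trans (subset_union_left (s₂ := B))) y
    have hA := marg_le_marg_of_subset hp (inter_subset_left (s₂ := B))
      (fun i : A ↦ y ⟨i, mem_union_left _ i.2⟩)
    rw [← h] at hU hA
    rw [condIndepMarg, ← h, le_antisymm hU (marg_nonneg hp _ _),
      le_antisymm hA (marg_nonneg hp _ _)]
    simp
  · rw [condIndepMarg, eq_div_iff h.ne']

lemma marg_union_eq_condIndepMarg_iff (hp : ∀ x, 0 ≤ p x) (A B : Finset V) :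
    marg p (A ∪ B) = condIndepMarg p A B ↔
      ∀ x, margAt p (A ∪ B) x * margAt p (A ∩ B) x = margAt p A x * margAt p B x := by
  simp only [funext_iff, marg_union_eq_condIndepMarg_apply_iff hp]
  refine ⟨fun h x ↦ h _, fun h y ↦ ?_⟩
  rcases isEmpty_or_nonempty (V → Λ) with _ | ⟨⟨x₀⟩⟩
  · simp [marg] -- every marginal is an empty sum
  · set x : V → Λ := fun v ↦ if hv : v ∈ A ∪ B then y ⟨v, hv⟩ else x₀ v
    have hx : (fun i : (A ∪ B : Finset V) ↦ x i) = y := funext fun i ↦ dif_pos i.2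
    rw [← hx]
    exact h x

end Marginals

theorem info_modular_iff_condIndep_general {V Λ : Type*} [Fintype V] [DecidableEq V] [Fintype Λ] [DecidableEq Λ]
    (p : (V → Λ) → ℝ) (hp : ∀ x, 0 ≤ p x)
    (C1 C2 : Finset V) :
    info p (C1 ∪ C2) + info p (C1 ∩ C2) = info p C1 + info p C2
      ↔ ∀ x : V → Λ,
          margAt p (C1 ∪ C2) x * margAt p (C1 ∩ C2) x = margAt p C1 x * margAt p C2 x := by
  rw [← sub_eq_zero, info_union_add_info_inter_sub, entH_add_entH_sub_eq_KL hp,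
    KL_eq_zero_iff (marg_nonneg hp _) (condIndepMarg_nonneg hp)
      (by rw [sum_marg, sum_condIndepMarg hp]) (marg_union_eq_zero_of_condIndepMarg_eq_zero hp),
    marg_union_eq_condIndepMarg_iff hp]

/-- equality `I(X_{C₁∪C₂}) + I(X_{C₁∩C₂}) = I(X_{C₁}) + I(X_{C₂})` holds
iff `X_{C₁\C₂}` and `X_{C₂\C₁}` are conditionally independent given `X_{C₁∩C₂}`,
i.e. iff `P(x_{C₁∪C₂})·P(x_{C₁∩C₂}) = P(x_{C₁})·P(x_{C₂})` for all `x`. -/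
theorem info_modular_iff_condIndep {V Λ : Type*} [Fintype V] [DecidableEq V] [Fintype Λ] [DecidableEq Λ]
    (p : (V → Λ) → ℝ) (hp : ∀ x, 0 ≤ p x) (hsum : ∑ x, p x = 1)
    (C1 C2 : Finset V) :
    info p (C1 ∪ C2) + info p (C1 ∩ C2) = info p C1 + info p C2
      ↔ ∀ x : V → Λ,
          margAt p (C1 ∪ C2) x * margAt p (C1 ∩ C2) x = margAt p C1 x * margAt p C2 x :=
  info_modular_iff_condIndep_general p hp C1 C2
end

section
/- The information content is monotone: if A ⊆ B ⊆ V, then I(X_A) ≤ I(X_B). -/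
open Real Finset

/-! Adding a coordinate `j ∉ A` raises `I(X_A)` by `H(X_A) + H(X_j) - H(X_{A ∪ {j}})`, the mutual
information of `X_A` and `X_j`. It is nonnegative because entropy is subadditive, which is Gibbs'
inequality for the joint law against the product of its marginals. -/

theorem sum_mul_log_le_sum_mul_log {ι : Type*} [Fintype ι] {q r : ι → ℝ}
    (hq : ∀ i, 0 ≤ q i) (hr : ∀ i, 0 ≤ r i) (hqr : ∀ i, 0 < q i → 0 < r i)
    (hsum : ∑ i, r i ≤ ∑ i, q i) :
    ∑ i, q i * log (r i) ≤ ∑ i, q i * log (q i) := by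
  have hterm : ∀ i, q i * (log (r i) - log (q i)) ≤ r i - q i := by
    intro i
    rcases (hq i).eq_or_lt with hq0 | hqpos
    · simpa [← hq0] using hr i
    · have hrpos := hqr i hqpos
      calc q i * (log (r i) - log (q i)) = q i * log (r i / q i) := by
            rw [log_div hrpos.ne' hqpos.ne']
        _ ≤ q i * (r i / q i - 1) :=
            mul_le_mul_of_nonneg_left (log_le_sub_one_of_pos (div_pos hrpos hqpos)) (hq i)
        _ = r i - q i := by field_simp
  have := sum_le_sum fun i (_ : i ∈ univ) => hterm i
  simp only [mul_sub, sum_sub_distrib] at this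
  linarith

section Pushforward

variable {Ω α β : Type*} [Fintype Ω] [DecidableEq α] [DecidableEq β]

noncomputable def pushforward (p : Ω → ℝ) (f : Ω → α) (a : α) : ℝ :=
  ∑ x with f x = a, p x

variable {p : Ω → ℝ}

theorem pushforward_nonneg (hp : ∀ x, 0 ≤ p x) (f : Ω → α) (a : α) : 0 ≤ pushforward p f a :=
  sum_nonneg fun x _ => hp x

theorem le_pushforward_apply (hp : ∀ x, 0 ≤ p x) (f : Ω → α) (x : Ω) :
    p x ≤ pushforward p f (f x) :=
  single_le_sum (fun y _ => hp y) (mem_filter.2 ⟨mem_univ x, rfl⟩)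

theorem pushforward_pair_le_left (hp : ∀ x, 0 ≤ p x) (f : Ω → α) (g : Ω → β) (a : α) (b : β) :
    pushforward p (fun x => (f x, g x)) (a, b) ≤ pushforward p f a :=
  sum_le_sum_of_subset_of_nonneg (fun x hx => by simp_all) fun x _ _ => hp x

theorem pushforward_pair_le_right (hp : ∀ x, 0 ≤ p x) (f : Ω → α) (g : Ω → β) (a : α) (b : β) :
    pushforward p (fun x => (f x, g x)) (a, b) ≤ pushforward p g b :=
  sum_le_sum_of_subset_of_nonneg (fun x hx => by simp_all) fun x _ _ => hp x

variable [Fintype α] [Fintype β]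

variable (p)

theorem sum_pushforward_mul (f : Ω → α) (g : α → ℝ) :
    ∑ a, pushforward p f a * g a = ∑ x, p x * g (f x) := by
  rw [← sum_fiberwise univ f fun x => p x * g (f x)]
  refine sum_congr rfl fun a _ => ?_
  rw [pushforward, sum_mul]
  exact sum_congr rfl fun x hx => by rw [(mem_filter.1 hx).2]

theorem sum_pushforward (f : Ω → α) : ∑ a, pushforward p f a = ∑ x, p x :=
  sum_fiberwise univ f p

theorem entH_pushforward (f : Ω → α) :
    entH (pushforward p f) = ∑ x, p x * -log (pushforward p f (f x)) := by
  rw [entH, ← sum_pushforward_mul p f fun a => -log (pushforward p f a)]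
  simp only [negMulLog, neg_mul, mul_neg]

theorem entH_pushforward_comp {e : α → β} (he : Function.Injective e) (f : Ω → α) :
    entH (pushforward p (e ∘ f)) = entH (pushforward p f) := by
  have hfiber : ∀ a, pushforward p (e ∘ f) (e a) = pushforward p f a := by
    simp [pushforward, he.eq_iff]
  rw [entH_pushforward, entH_pushforward]
  simp only [Function.comp_apply, hfiber]

variable {p}

theorem entH_pushforward_pair_le (hp : ∀ x, 0 ≤ p x) (hsum : ∑ x, p x = 1)
    (f : Ω → α) (g : Ω → β) :
    entH (pushforward p (fun x => (f x, g x))) ≤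
      entH (pushforward p f) + entH (pushforward p g) := by
  set q := pushforward p (fun x => (f x, g x))
  set r : α × β → ℝ := fun ab => pushforward p f ab.1 * pushforward p g ab.2
  have hgibbs : ∑ ab, q ab * log (r ab) ≤ ∑ ab, q ab * log (q ab) := by
    refine sum_mul_log_le_sum_mul_log (pushforward_nonneg hp _)
      (fun ab => mul_nonneg (pushforward_nonneg hp _ _) (pushforward_nonneg hp _ _))
      (fun ⟨a, b⟩ hab => mul_pos (hab.trans_le (pushforward_pair_le_left hp f g a b))
        (hab.trans_le (pushforward_pair_le_right hp f g a b))) (le_of_eq ?_)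
    rw [Fintype.sum_prod_type, ← sum_mul_sum, sum_pushforward, sum_pushforward, sum_pushforward,
      hsum, one_mul]
  have hcross : ∑ ab, q ab * log (r ab) = -(entH (pushforward p f) + entH (pushforward p g)) := by
    rw [sum_pushforward_mul, entH_pushforward, entH_pushforward, ← sum_add_distrib,
      ← sum_neg_distrib]
    refine sum_congr rfl fun x _ => ?_
    rcases (hp x).eq_or_lt with hp0 | hpos
    · simp [← hp0]
    · rw [log_mul (hpos.trans_le (le_pushforward_apply hp f x)).ne'
        (hpos.trans_le (le_pushforward_apply hp g x)).ne']
      ring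
  have hq : entH q = -∑ ab, q ab * log (q ab) := by
    simp only [entH, negMulLog, neg_mul, sum_neg_distrib]
  linarith

end Pushforward

theorem union_restrict_pair_injective {V Λ : Type*} [DecidableEq V] (A B : Finset V) :
    Function.Injective fun z : (A ∪ B : Finset V) → Λ =>
      ((fun i : A => z ⟨i, mem_union_left B i.2⟩), fun i : B => z ⟨i, mem_union_right A i.2⟩) := by
  intro z z' h
  funext ⟨i, hi⟩
  rcases mem_union.1 hi with hA | hB
  · exact congrFun (congrArg Prod.fst h) ⟨i, hA⟩
  · exact congrFun (congrArg Prod.snd h) ⟨i, hB⟩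

section Marginal

variable {V Λ : Type*} [Fintype V] [DecidableEq V] [Fintype Λ] [DecidableEq Λ]

theorem marg_eq_pushforward (p : (V → Λ) → ℝ) (A : Finset V) :
    marg p A = pushforward p (A.restrict : (V → Λ) → A → Λ) := by
  funext y
  simp [marg, pushforward, sum_filter, funext_iff, Finset.restrict]

variable {p : (V → Λ) → ℝ}

theorem entH_marg_union_le (hp : ∀ x, 0 ≤ p x) (hsum : ∑ x, p x = 1) (A B : Finset V) :
    entH (marg p (A ∪ B)) ≤ entH (marg p A) + entH (marg p B) := by
  rw [marg_eq_pushforward, ← entH_pushforward_comp p (union_restrict_pair_injective A B),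
    marg_eq_pushforward, marg_eq_pushforward]
  exact entH_pushforward_pair_le hp hsum _ _

theorem info_le_info_insert (hp : ∀ x, 0 ≤ p x) (hsum : ∑ x, p x = 1) {A : Finset V} {j : V}
    (hj : j ∉ A) : info p A ≤ info p (insert j A) := by
  have hsub := entH_marg_union_le hp hsum {j} A
  rw [← insert_eq] at hsub
  rw [info, info, sum_insert hj]
  linarith

theorem monotone_info (hp : ∀ x, 0 ≤ p x) (hsum : ∑ x, p x = 1) : Monotone (info p) :=
  monotone_iff_forall_le_insert.2 fun _ _ hj => info_le_info_insert hp hsum hj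

end Marginal

/-- the information content is monotone: `A ⊆ B → I(X_A) ≤ I(X_B)`. -/
theorem info_monotone {V Λ : Type*} [Fintype V] [DecidableEq V] [Fintype Λ] [DecidableEq Λ]
    (p : (V → Λ) → ℝ) (hp : ∀ x, 0 ≤ p x) (hsum : ∑ x, p x = 1)
    (A B : Finset V) (hAB : A ⊆ B) :
    info p A ≤ info p B :=
  monotone_info hp hsum hAB
end
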